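/- arXiv:2105.11042 — 3 statements merged into one kernel-verified Lean document; each statement's English description precedes it below -/
import Mathlib

section
/- The function f₃(a,b,y) = 4y(a+b+y)φ(a+b+y) for a,b,y > 0 (and 0 otherwise), where φ is the standard normal density, is a probability density on ℝ³, i.e., ∫∫∫_{(0,∞)³} 4y(a+b+y)φ(a+b+y) da db dy = 1. -/
/-!
Write `Ψ(s) = ∫_s^∞ φ` for the Gaussian tail, so that `φ' = -x φ` and `Ψ' = -φ`. The three
integrals are computed from the inside out, each by the fundamental theorem of calculus on a
half-line with an explicit antiderivative: the `y`-integral is `4 Ψ(a + b)`, the `b`-integral is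
`4 (φ(a) - a Ψ(a))`, and `∫_0^∞ (φ(a) - a Ψ(a)) da = Ψ(0) / 2 = 1 / 4`. Every integrand is
nonnegative, so its integrability follows from the limit of the antiderivative at infinity;
Mills' inequality `s Ψ(s) ≤ φ(s)` provides this nonnegativity and the decay of `s^k Ψ(s)`.
-/

open MeasureTheory Real Set

noncomputable def stdGaussianPDF (x : ℝ) : ℝ :=
  (Real.sqrt (2 * Real.pi))⁻¹ * Real.exp (-x ^ 2 / 2)

open Filter Topology

lemma integral_Ioi_zero_comp_const_add (f : ℝ → ℝ) (s : ℝ) :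
    ∫ y in Ioi 0, f (s + y) = ∫ t in Ioi s, f t := by
  simpa using (measurePreserving_add_left volume s).setIntegral_preimage_emb
    (measurableEmbedding_addLeft s) f (Ioi s)

lemma stdGaussianPDF_nonneg (x : ℝ) : 0 ≤ stdGaussianPDF x := by
  unfold stdGaussianPDF; positivity

lemma stdGaussianPDF_eq_mul_exp_neg_mul_sq (x : ℝ) :
    stdGaussianPDF x = (√(2 * π))⁻¹ * exp (-(1 / 2) * x ^ 2) := by
  rw [stdGaussianPDF]; ring_nf

lemma integrable_stdGaussianPDF : Integrable stdGaussianPDF := by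
  simpa only [← stdGaussianPDF_eq_mul_exp_neg_mul_sq] using
    (integrable_exp_neg_mul_sq (by norm_num : (0 : ℝ) < 1 / 2)).const_mul (√(2 * π))⁻¹

lemma hasDerivAt_stdGaussianPDF (x : ℝ) :
    HasDerivAt stdGaussianPDF (-x * stdGaussianPDF x) x := by
  have h : HasDerivAt (fun x => -x ^ 2 / 2) (-x) x :=
    ((hasDerivAt_pow 2 x).fun_neg.div_const 2).congr_deriv (by push_cast; ring)
  exact (h.exp.const_mul (√(2 * π))⁻¹).congr_deriv (by rw [stdGaussianPDF]; ring)

lemma tendsto_pow_mul_stdGaussianPDF_atTop (n : ℕ) :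
    Tendsto (fun x => x ^ n * stdGaussianPDF x) atTop (𝓝 0) := by
  have h := ((rpow_mul_exp_neg_mul_sq_isLittleO_exp_neg (by norm_num : (0 : ℝ) < 1 / 2)
    n).isBigO.trans_tendsto (tendsto_exp_atBot.comp
      (tendsto_id.const_mul_atTop_of_neg (by norm_num)))).const_mul (√(2 * π))⁻¹
  rw [mul_zero] at h
  refine h.congr fun x => ?_
  rw [rpow_natCast, stdGaussianPDF_eq_mul_exp_neg_mul_sq]; ring

lemma tendsto_stdGaussianPDF_atTop : Tendsto stdGaussianPDF atTop (𝓝 0) := by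
  simpa using tendsto_pow_mul_stdGaussianPDF_atTop 0

noncomputable def stdGaussianTail (s : ℝ) : ℝ := ∫ t in Ioi s, stdGaussianPDF t

lemma stdGaussianTail_nonneg (s : ℝ) : 0 ≤ stdGaussianTail s :=
  setIntegral_nonneg measurableSet_Ioi fun x _ => stdGaussianPDF_nonneg x

lemma stdGaussianTail_zero : stdGaussianTail 0 = 1 / 2 := by
  rw [stdGaussianTail]
  simp_rw [stdGaussianPDF_eq_mul_exp_neg_mul_sq]
  rw [integral_const_mul, integral_gaussian_Ioi, show π / (1 / 2) = 2 * π by ring]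
  have : 0 < √(2 * π) := by positivity
  field_simp

lemma stdGaussianTail_eq_sub_intervalIntegral (s : ℝ) :
    stdGaussianTail s = stdGaussianTail 0 - ∫ t in 0..s, stdGaussianPDF t :=
  eq_sub_of_add_eq' (intervalIntegral.integral_interval_add_Ioi
    integrable_stdGaussianPDF.integrableOn integrable_stdGaussianPDF.integrableOn)

lemma hasDerivAt_stdGaussianTail (s : ℝ) :
    HasDerivAt stdGaussianTail (-stdGaussianPDF s) s := by
  have hcont : Continuous stdGaussianPDF := by unfold stdGaussianPDF; fun_prop
  have h := (intervalIntegral.integral_hasDerivAt_right (a := 0) (b := s)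
    integrable_stdGaussianPDF.intervalIntegrable (hcont.stronglyMeasurableAtFilter _ _)
    hcont.continuousAt).const_sub (stdGaussianTail 0)
  exact h.congr_of_eventuallyEq (Eventually.of_forall stdGaussianTail_eq_sub_intervalIntegral)

lemma tendsto_stdGaussianTail_atTop : Tendsto stdGaussianTail atTop (𝓝 0) := by
  have h : Tendsto (fun s => stdGaussianTail 0 - ∫ t in 0..s, stdGaussianPDF t) atTop
      (𝓝 (stdGaussianTail 0 - stdGaussianTail 0)) := tendsto_const_nhds.sub
    (intervalIntegral_tendsto_integral_Ioi 0 integrable_stdGaussianPDF.integrableOn tendsto_id)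
  rw [sub_self] at h
  exact h.congr fun s => (stdGaussianTail_eq_sub_intervalIntegral s).symm

lemma hasDerivAt_neg_stdGaussianPDF (x : ℝ) :
    HasDerivAt (fun t => -stdGaussianPDF t) (x * stdGaussianPDF x) x := by
  simpa using (hasDerivAt_stdGaussianPDF x).fun_neg

lemma integrableOn_Ioi_mul_stdGaussianPDF {s : ℝ} (hs : 0 ≤ s) :
    IntegrableOn (fun t => t * stdGaussianPDF t) (Ioi s) :=
  integrableOn_Ioi_deriv_of_nonneg' (fun x _ => hasDerivAt_neg_stdGaussianPDF x)
    (fun t ht => mul_nonneg (hs.trans ht.out.le) (stdGaussianPDF_nonneg t))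
    tendsto_stdGaussianPDF_atTop.neg

lemma integral_Ioi_mul_stdGaussianPDF {s : ℝ} (hs : 0 ≤ s) :
    ∫ t in Ioi s, t * stdGaussianPDF t = stdGaussianPDF s := by
  rw [integral_Ioi_of_hasDerivAt_of_tendsto' (fun x _ => hasDerivAt_neg_stdGaussianPDF x)
    (integrableOn_Ioi_mul_stdGaussianPDF hs) (by simpa using tendsto_stdGaussianPDF_atTop.neg)]
  ring

lemma mul_stdGaussianTail_le {s : ℝ} (hs : 0 ≤ s) :
    s * stdGaussianTail s ≤ stdGaussianPDF s := by
  rw [stdGaussianTail, ← integral_const_mul, ← integral_Ioi_mul_stdGaussianPDF hs]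
  exact setIntegral_mono_on (integrable_stdGaussianPDF.integrableOn.const_mul s)
    (integrableOn_Ioi_mul_stdGaussianPDF hs) measurableSet_Ioi
    fun t ht => mul_le_mul_of_nonneg_right ht.out.le (stdGaussianPDF_nonneg t)

lemma tendsto_pow_succ_mul_stdGaussianTail_atTop (n : ℕ) :
    Tendsto (fun t => t ^ (n + 1) * stdGaussianTail t) atTop (𝓝 0) := by
  refine squeeze_zero' ?_ ?_ (tendsto_pow_mul_stdGaussianPDF_atTop n)
  · filter_upwards [eventually_ge_atTop 0] with t ht
    exact mul_nonneg (by positivity) (stdGaussianTail_nonneg t)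
  · filter_upwards [eventually_ge_atTop 0] with t ht
    rw [pow_succ, mul_assoc]
    exact mul_le_mul_of_nonneg_left (mul_stdGaussianTail_le ht) (by positivity)

lemma integral_Ioi_sub_mul_mul_stdGaussianPDF {s : ℝ} (hs : 0 ≤ s) :
    ∫ t in Ioi s, (t - s) * t * stdGaussianPDF t = stdGaussianTail s := by
  have hderiv (t : ℝ) : HasDerivAt (fun t => (s - t) * stdGaussianPDF t - stdGaussianTail t)
      ((t - s) * t * stdGaussianPDF t) t := by
    refine ((((hasDerivAt_id' t).const_sub s).fun_mul (hasDerivAt_stdGaussianPDF t)).fun_sub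
      (hasDerivAt_stdGaussianTail t)).congr_deriv ?_
    ring
  have hlim : Tendsto (fun t => (s - t) * stdGaussianPDF t - stdGaussianTail t) atTop (𝓝 0) := by
    have h := ((tendsto_stdGaussianPDF_atTop.const_mul s).sub
      (tendsto_pow_mul_stdGaussianPDF_atTop 1)).sub tendsto_stdGaussianTail_atTop
    simp only [mul_zero, sub_zero, pow_one] at h
    exact h.congr fun t => by ring
  rw [integral_Ioi_of_hasDerivAt_of_nonneg' (fun t _ => hderiv t) (fun t (ht : s < t) =>
    mul_nonneg (mul_nonneg (sub_nonneg.2 ht.le) (hs.trans ht.le)) (stdGaussianPDF_nonneg t)) hlim]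
  ring

lemma integral_Ioi_stdGaussianTail (a : ℝ) :
    ∫ t in Ioi a, stdGaussianTail t = stdGaussianPDF a - a * stdGaussianTail a := by
  have hderiv (t : ℝ) : HasDerivAt (fun t => t * stdGaussianTail t - stdGaussianPDF t)
      (stdGaussianTail t) t := by
    refine (((hasDerivAt_id' t).fun_mul (hasDerivAt_stdGaussianTail t)).fun_sub
      (hasDerivAt_stdGaussianPDF t)).congr_deriv ?_
    ring
  have hlim := (tendsto_pow_succ_mul_stdGaussianTail_atTop 0).sub tendsto_stdGaussianPDF_atTop
  simp only [zero_add, pow_one, sub_zero] at hlim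
  rw [integral_Ioi_of_hasDerivAt_of_nonneg' (fun t _ => hderiv t)
    (fun t _ => stdGaussianTail_nonneg t) hlim]
  ring

lemma integral_Ioi_zero_stdGaussianPDF_sub_mul_stdGaussianTail :
    ∫ x in Ioi 0, (stdGaussianPDF x - x * stdGaussianTail x) = 1 / 4 := by
  have hderiv (x : ℝ) : HasDerivAt
      (fun x => x / 2 * stdGaussianPDF x - (x ^ 2 + 1) / 2 * stdGaussianTail x)
      (stdGaussianPDF x - x * stdGaussianTail x) x := by
    refine ((((hasDerivAt_id' x).div_const 2).fun_mul (hasDerivAt_stdGaussianPDF x)).fun_sub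
      ((((hasDerivAt_pow 2 x).add_const 1).div_const 2).fun_mul
        (hasDerivAt_stdGaussianTail x))).congr_deriv ?_
    push_cast
    ring
  have hlim : Tendsto (fun x => x / 2 * stdGaussianPDF x - (x ^ 2 + 1) / 2 * stdGaussianTail x)
      atTop (𝓝 0) := by
    have h := ((tendsto_pow_mul_stdGaussianPDF_atTop 1).sub
      ((tendsto_pow_succ_mul_stdGaussianTail_atTop 1).add
        tendsto_stdGaussianTail_atTop)).div_const 2
    simp only [add_zero, sub_zero, zero_div] at h
    exact h.congr fun x => by ring
  rw [integral_Ioi_of_hasDerivAt_of_nonneg' (fun x _ => hderiv x)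
    (fun x hx => sub_nonneg.2 (mul_stdGaussianTail_le hx.out.le)) hlim, stdGaussianTail_zero]
  norm_num

lemma integral_Ioi_zero_mul_mul_stdGaussianPDF_const_add {s : ℝ} (hs : 0 ≤ s) :
    ∫ y in Ioi 0, 4 * y * (s + y) * stdGaussianPDF (s + y) = 4 * stdGaussianTail s := by
  rw [← integral_Ioi_sub_mul_mul_stdGaussianPDF hs, ← integral_const_mul,
    ← integral_Ioi_zero_comp_const_add (fun t => 4 * ((t - s) * t * stdGaussianPDF t))]
  simp only [add_sub_cancel_left, ← mul_assoc]

theorem f3_is_probability_density :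
    ∫ a in Ioi (0 : ℝ), ∫ b in Ioi (0 : ℝ), ∫ y in Ioi (0 : ℝ),
      4 * y * (a + b + y) * stdGaussianPDF (a + b + y) = 1 := by
  calc _ = ∫ a in Ioi (0 : ℝ), ∫ b in Ioi (0 : ℝ), 4 * stdGaussianTail (a + b) :=
        setIntegral_congr_fun measurableSet_Ioi fun (a : ℝ) ha =>
          setIntegral_congr_fun measurableSet_Ioi fun (b : ℝ) hb =>
            integral_Ioi_zero_mul_mul_stdGaussianPDF_const_add (add_pos ha.out hb.out).le
    _ = ∫ a in Ioi (0 : ℝ), 4 * (stdGaussianPDF a - a * stdGaussianTail a) := by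
        congr 1 with a
        rw [integral_const_mul, integral_Ioi_zero_comp_const_add stdGaussianTail,
          integral_Ioi_stdGaussianTail]
    _ = 1 := by
        rw [integral_const_mul, integral_Ioi_zero_stdGaussianPDF_sub_mul_stdGaussianTail]
        norm_num
end

section
/- If a random vector (A,B,Y) on (0,∞)³ has joint density f₃(a,b,y) = 4y(a+b+y)φ(a+b+y), then the pair (A+B, Y) = (K(1), K(1)-B(1)) has joint density g(k,y) = 4ky(k+y)φ(k+y) on (0,∞)², and in particular this pair is exchangeable: (A+B, Y) has the same distribution as (Y, A+B). -/
open MeasureTheory ProbabilityTheory Set Real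

/-!
The shear `(a, b, y) ↦ (a, a + b, y)` preserves Lebesgue measure, so `(A, A + B, Y)` has density
`f₃(a, k - a, y)`. For `a ∈ (0, k)` this depends only on `(k, y)`, and it vanishes for other `a`;
integrating `a` out therefore multiplies by `k`, which gives `g`. Since `g` is symmetric, the law
of `(A + B, Y)` is invariant under the swap.
-/

open scoped ENNReal

namespace MeasureTheory

variable {α β : Type*} [MeasurableSpace α] [MeasurableSpace β]

theorem MeasurePreserving.map_withDensity_comp {μ : Measure α} {ν : Measure β} {e : α → β}
    (he : MeasurePreserving e μ ν) (he' : MeasurableEmbedding e) (f : β → ℝ≥0∞) :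
    (μ.withDensity (f ∘ e)).map e = ν.withDensity f := by
  ext s hs
  rw [Measure.map_apply he.measurable hs, withDensity_apply _ (he.measurable hs),
    withDensity_apply _ hs]
  exact he.setLIntegral_comp_preimage_emb he' f s

theorem Measure.map_snd_withDensity_prod {μ : Measure α} {ν : Measure β} [SFinite μ] [SFinite ν]
    {f : α × β → ℝ≥0∞} (hf : Measurable f) :
    ((μ.prod ν).withDensity f).map Prod.snd = ν.withDensity fun y => ∫⁻ x, f (x, y) ∂μ := by
  ext s hs
  rw [Measure.map_apply measurable_snd hs, withDensity_apply _ (measurable_snd hs),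
    withDensity_apply _ hs, ← univ_prod, setLIntegral_prod_symm _ hf.aemeasurable]
  simp only [Measure.restrict_univ]

theorem Measure.map_swap_withDensity_prod_of_comp_swap (μ : Measure α) [SFinite μ]
    {f : α × α → ℝ≥0∞} (hf : f ∘ Prod.swap = f) :
    ((μ.prod μ).withDensity f).map Prod.swap = (μ.prod μ).withDensity f := by
  conv_lhs => rw [← hf]
  exact measurePreserving_swap.map_withDensity_comp MeasurableEquiv.prodComm.measurableEmbedding f

section Shear

variable {G : Type*} [AddCommGroup G] [MeasurableSpace G] [MeasurableAdd₂ G] [MeasurableNeg G]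

def MeasurableEquiv.shearAddFst : G × G × β ≃ᵐ G × G × β where
  toFun p := (p.1, p.1 + p.2.1, p.2.2)
  invFun p := (p.1, p.2.1 - p.1, p.2.2)
  left_inv p := by simp
  right_inv p := by simp
  measurable_toFun := by
    change Measurable fun p : G × G × β => (p.1, p.1 + p.2.1, p.2.2); fun_prop
  measurable_invFun := by
    change Measurable fun p : G × G × β => (p.1, p.2.1 - p.1, p.2.2); fun_prop

theorem measurePreserving_shearAddFst (μ ν : Measure G) (ρ : Measure β)
    [SFinite μ] [SFinite ν] [SFinite ρ] [ν.IsAddLeftInvariant] :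
    MeasurePreserving (MeasurableEquiv.shearAddFst (β := β))
      (μ.prod (ν.prod ρ)) (μ.prod (ν.prod ρ)) :=
  (MeasurePreserving.id μ).skew_product (g := fun (a : G) (q : G × β) => (a + q.1, q.2))
    (by fun_prop) <|
    ae_of_all _ fun a => ((measurePreserving_add_left ν a).prod (MeasurePreserving.id ρ)).map_eq

theorem Measure.map_add_withDensity_prod (μ ν : Measure G) (ρ : Measure β)
    [SFinite μ] [SFinite ν] [SFinite ρ] [ν.IsAddLeftInvariant]
    {f : G × G × β → ℝ≥0∞} (hf : Measurable f) :
    ((μ.prod (ν.prod ρ)).withDensity f).map (fun p => (p.1 + p.2.1, p.2.2))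
      = (ν.prod ρ).withDensity fun q => ∫⁻ a, f (a, q.1 - a, q.2) ∂μ := by
  set e := MeasurableEquiv.shearAddFst (G := G) (β := β)
  have hfe : f = (f ∘ e.symm) ∘ e := by ext p; simp
  have hsnd : (fun p : G × G × β => (p.1 + p.2.1, p.2.2)) = Prod.snd ∘ e := rfl
  rw [hsnd, ← Measure.map_map measurable_snd e.measurable]
  conv_lhs => rw [hfe]
  rw [(measurePreserving_shearAddFst μ ν ρ).map_withDensity_comp e.measurableEmbedding,
    Measure.map_snd_withDensity_prod (hf.comp e.symm.measurable)]
  rfl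

end Shear

theorem Measure.map_add_withDensity_ite_pos (ρ : Measure β) [SFinite ρ] {h : ℝ × β → ℝ≥0∞}
    (hh : Measurable h) :
    ((volume.prod (volume.prod ρ)).withDensity fun p : ℝ × ℝ × β =>
        if 0 < p.1 ∧ 0 < p.2.1 then h (p.1 + p.2.1, p.2.2) else 0).map
        (fun p => (p.1 + p.2.1, p.2.2))
      = (volume.prod ρ).withDensity fun q => ENNReal.ofReal q.1 * h q := by
  rw [Measure.map_add_withDensity_prod _ _ _
    (Measurable.ite (by measurability) (by fun_prop) measurable_const)]
  congr with ⟨k, y⟩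
  have hslice : ∀ a : ℝ, (if 0 < a ∧ 0 < k - a then h (a + (k - a), y) else 0)
      = (Ioo 0 k).indicator (fun _ => h (k, y)) a := by
    intro a
    simp only [indicator, mem_Ioo, sub_pos, add_sub_cancel]
  simp_rw [hslice]
  rw [lintegral_indicator_const measurableSet_Ioo, Real.volume_Ioo, sub_zero, mul_comm]

end MeasureTheory

noncomputable def tripleDensity (p : ℝ × ℝ × ℝ) : ℝ≥0∞ := ENNReal.ofReal
  (if 0 < p.1 ∧ 0 < p.2.1 ∧ 0 < p.2.2 then
    4 * p.2.2 * (p.1 + p.2.1 + p.2.2) * stdGaussianPDF (p.1 + p.2.1 + p.2.2) else 0)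

noncomputable def pairDensity (p : ℝ × ℝ) : ℝ≥0∞ := ENNReal.ofReal
  (if 0 < p.1 ∧ 0 < p.2 then 4 * p.1 * p.2 * (p.1 + p.2) * stdGaussianPDF (p.1 + p.2) else 0)

noncomputable def tripleDensityOfSum (q : ℝ × ℝ) : ℝ≥0∞ :=
  ENNReal.ofReal (if 0 < q.2 then 4 * q.2 * (q.1 + q.2) * stdGaussianPDF (q.1 + q.2) else 0)

theorem measurable_tripleDensityOfSum : Measurable tripleDensityOfSum := by
  unfold tripleDensityOfSum stdGaussianPDF
  exact .ennreal_ofReal <| .ite (measurableSet_lt measurable_const measurable_snd) (by fun_prop)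
    measurable_const

theorem tripleDensity_eq_ite (p : ℝ × ℝ × ℝ) :
    tripleDensity p
      = if 0 < p.1 ∧ 0 < p.2.1 then tripleDensityOfSum (p.1 + p.2.1, p.2.2) else 0 := by
  by_cases h : 0 < p.1 ∧ 0 < p.2.1 <;>
    simp [tripleDensity, tripleDensityOfSum, h, ← and_assoc]

theorem ofReal_mul_tripleDensityOfSum (q : ℝ × ℝ) :
    ENNReal.ofReal q.1 * tripleDensityOfSum q = pairDensity q := by
  obtain ⟨k, y⟩ := q
  rcases le_or_gt k 0 with hk | hk
  · simp [pairDensity, ENNReal.ofReal_of_nonpos hk, not_lt.2 hk]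
  · rw [tripleDensityOfSum, pairDensity, ← ENNReal.ofReal_mul hk.le]
    simp only [hk, true_and]
    congr 1
    split_ifs <;> ring

theorem pairDensity_comp_swap : pairDensity ∘ Prod.swap = pairDensity := by
  ext ⟨k, y⟩
  simp only [Function.comp_apply, Prod.swap_prod_mk, pairDensity, add_comm y k,
    and_comm (a := 0 < y)]
  ring_nf

theorem pair_density_and_exchangeable_general
    {Ω : Type*} [MeasureSpace Ω]
    (X : Ω → ℝ × ℝ × ℝ) (hMX : Measurable X)
    (hX : Measure.map X ℙ
      = volume.withDensity (fun p : ℝ × ℝ × ℝ => ENNReal.ofReal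
          (if 0 < p.1 ∧ 0 < p.2.1 ∧ 0 < p.2.2 then
            4 * p.2.2 * (p.1 + p.2.1 + p.2.2) * stdGaussianPDF (p.1 + p.2.1 + p.2.2)
          else 0))) :
    Measure.map (fun ω => ((X ω).1 + (X ω).2.1, (X ω).2.2)) ℙ
      = volume.withDensity (fun p : ℝ × ℝ => ENNReal.ofReal
          (if 0 < p.1 ∧ 0 < p.2 then
            4 * p.1 * p.2 * (p.1 + p.2) * stdGaussianPDF (p.1 + p.2) else 0))
    ∧ Measure.map (fun ω => ((X ω).1 + (X ω).2.1, (X ω).2.2)) ℙ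
      = Measure.map (fun ω => ((X ω).2.2, (X ω).1 + (X ω).2.1)) ℙ := by
  change Measure.map X ℙ = volume.withDensity tripleDensity at hX
  have hsum : Measurable fun p : ℝ × ℝ × ℝ => (p.1 + p.2.1, p.2.2) := by fun_prop
  have hpairM : Measurable fun ω => ((X ω).1 + (X ω).2.1, (X ω).2.2) := hsum.comp hMX
  have hpair : Measure.map (fun ω => ((X ω).1 + (X ω).2.1, (X ω).2.2)) ℙ
      = volume.withDensity pairDensity := by
    refine (Measure.map_map hsum hMX).symm.trans ?_
    rw [hX, funext tripleDensity_eq_ite]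
    simp only [Measure.volume_eq_prod]
    rw [Measure.map_add_withDensity_ite_pos _ measurable_tripleDensityOfSum,
      funext ofReal_mul_tripleDensityOfSum]
  refine ⟨hpair, Eq.trans ?_ (Measure.map_map measurable_swap hpairM)⟩
  rw [hpair, Measure.volume_eq_prod,
    Measure.map_swap_withDensity_prod_of_comp_swap _ pairDensity_comp_swap]

theorem pair_density_and_exchangeable
    {Ω : Type*} [MeasureSpace Ω] [IsProbabilityMeasure (ℙ : Measure Ω)]
    (X : Ω → ℝ × ℝ × ℝ) (hMX : Measurable X)
    (hX : Measure.map X ℙ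
      = volume.withDensity (fun p : ℝ × ℝ × ℝ => ENNReal.ofReal
          (if 0 < p.1 ∧ 0 < p.2.1 ∧ 0 < p.2.2 then
            4 * p.2.2 * (p.1 + p.2.1 + p.2.2) * stdGaussianPDF (p.1 + p.2.1 + p.2.2)
          else 0))) :
    Measure.map (fun ω => ((X ω).1 + (X ω).2.1, (X ω).2.2)) ℙ
      = volume.withDensity (fun p : ℝ × ℝ => ENNReal.ofReal
          (if 0 < p.1 ∧ 0 < p.2 then
            4 * p.1 * p.2 * (p.1 + p.2) * stdGaussianPDF (p.1 + p.2) else 0))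
    ∧ Measure.map (fun ω => ((X ω).1 + (X ω).2.1, (X ω).2.2)) ℙ
      = Measure.map (fun ω => ((X ω).2.2, (X ω).1 + (X ω).2.1)) ℙ :=
  pair_density_and_exchangeable_general X hMX hX
end

section
/- The map h on (0,∞)³ × (0,1) defined by h(t,r,q,u) = (u²(t+q), u(1-u)(t+q) + ur, r²q/(t(t+q)), r/(r + (1-u)(t+q))) is injective. -/
open Set

noncomputable def ouakiPitmanMap (p : ℝ × ℝ × ℝ × ℝ) : ℝ × ℝ × ℝ × ℝ :=
  let t := p.1; let r := p.2.1; let q := p.2.2.1; let u := p.2.2.2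
  (u ^ 2 * (t + q), u * (1 - u) * (t + q) + u * r,
    r ^ 2 * q / (t * (t + q)), r / (r + (1 - u) * (t + q)))

/-! Writing `(a, b, c, d) = h (t, r, q, u)` and `s = t + q`, one has `b (1 - d) = u (1 - u) s`,
so `a + b (1 - d) = u s`; together with `a = u² s` this recovers `u` and `s`, then `r` from `b`,
and finally the ratio `q / t = c s / r²` from `c`. Hence `h` has an explicit left inverse. -/

noncomputable def ouakiPitmanInv (x : ℝ × ℝ × ℝ × ℝ) : ℝ × ℝ × ℝ × ℝ :=
  let a := x.1; let b := x.2.1; let c := x.2.2.1; let d := x.2.2.2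
  let us := a + b * (1 - d)
  let u := a / us
  let s := us ^ 2 / a
  let r := b / u - (1 - u) * s
  let t := r ^ 2 * s / (r ^ 2 + c * s)
  (t, r, s - t, u)

theorem ouakiPitmanInv_leftInvOn :
    LeftInvOn ouakiPitmanInv ouakiPitmanMap
      (Ioi (0 : ℝ) ×ˢ Ioi (0 : ℝ) ×ˢ Ioi (0 : ℝ) ×ˢ Ioo (0 : ℝ) 1) := by
  rintro ⟨t, r, q, u⟩ ⟨ht, hr, hq, hu, hu1⟩
  simp only [mem_Ioi] at ht hr hq
  have hs : 0 < t + q := by positivity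
  have hden : 0 < r + (1 - u) * (t + q) := by nlinarith
  have hus_eq : u ^ 2 * (t + q) + (u * (1 - u) * (t + q) + u * r) * (1 - r / (r + (1 - u) * (t + q)))
      = u * (t + q) := by
    field_simp
    ring
  have hu_eq : u ^ 2 * (t + q) / (u * (t + q)) = u := by field_simp
  have hs_eq : (u * (t + q)) ^ 2 / (u ^ 2 * (t + q)) = t + q := by field_simp
  have hr_eq : (u * (1 - u) * (t + q) + u * r) / u - (1 - u) * (t + q) = r := by
    field_simp
    ring
  have ht_eq : r ^ 2 * (t + q) / (r ^ 2 + r ^ 2 * q / (t * (t + q)) * (t + q)) = t := by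
    field_simp
  simp only [ouakiPitmanInv, ouakiPitmanMap]
  rw [hus_eq, hu_eq, hs_eq, hr_eq, ht_eq, add_sub_cancel_left]

theorem ouakiPitmanMap_injective :
    Set.InjOn ouakiPitmanMap (Ioi (0 : ℝ) ×ˢ Ioi (0 : ℝ) ×ˢ Ioi (0 : ℝ) ×ˢ Ioo (0 : ℝ) 1) :=
  ouakiPitmanInv_leftInvOn.injOn
end
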